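/- Fix n ≥ 1 and c ∈ ℝ, and define G : ℝⁿ → ℝ by G(y₁,…,yₙ) = 2y₁² + Σ_{i=1}^{n−1}(y_{i+1} − y_i)² + 2(c − yₙ)². Then G has a unique global minimizer y*, and for every y ∈ ℝⁿ, G(y) − G(y*) ≥ (1/n²)·‖y − y*‖₂². -/

import Mathlib

/-- The quadratic function
`G(y₁,…,yₙ) = 2y₁² + Σ_{i=1}^{n-1}(y_{i+1} - y_i)² + 2(c - yₙ)²`, for `n+1` coordinates. -/
noncomputable def Gfun (n : ℕ) (c : ℝ) (y : EuclideanSpace ℝ (Fin (n + 1))) : ℝ :=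
  2 * (y 0) ^ 2 + (∑ i : Fin n, (y i.succ - y i.castSucc) ^ 2)
    + 2 * (c - y (Fin.last n)) ^ 2


noncomputable def clampd (n : ℕ) (d : Fin (n+1) → ℝ) (j : ℕ) : ℝ :=
  if h : j < n + 1 then d ⟨j, h⟩ else d (Fin.last n)

lemma clampd_lt {n : ℕ} (d : Fin (n+1) → ℝ) {j : ℕ} (h : j < n+1) :
    clampd n d j = d ⟨j, h⟩ := dif_pos h

lemma clampd_zero {n : ℕ} (d : Fin (n+1) → ℝ) : clampd n d 0 = d 0 :=
  clampd_lt d n.succ_pos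

lemma clampd_last {n : ℕ} (d : Fin (n+1) → ℝ) : clampd n d n = d (Fin.last n) := by
  rw [clampd_lt d (Nat.lt_succ_self n)]; rfl

lemma step_eq {n : ℕ} (d : Fin (n+1) → ℝ) (i : Fin n) :
    d i.succ - d i.castSucc = clampd n d (↑i+1) - clampd n d ↑i := by
  rw [clampd_lt d (by omega : (i:ℕ)+1 < n+1), clampd_lt d (by omega : (i:ℕ) < n+1)]
  rfl

lemma tele {n : ℕ} (d : Fin (n+1) → ℝ) :
    ∑ i : Fin n, (d i.succ - d i.castSucc) = d (Fin.last n) - d 0 := by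
  have h : ∀ i : Fin n, d i.succ - d i.castSucc
      = (fun j : ℕ => clampd n d (j+1) - clampd n d j) ↑i := fun i => step_eq d i
  rw [Finset.sum_congr rfl (fun i _ => h i),
    Fin.sum_univ_eq_sum_range (fun j : ℕ => clampd n d (j+1) - clampd n d j) n,
    Finset.sum_range_sub, clampd_last, clampd_zero]

lemma sq_tele {n : ℕ} (d : Fin (n+1) → ℝ) :
    ∑ i : Fin n, (d i.succ - d i.castSucc)^2
      = ∑ j ∈ Finset.range n, (clampd n d (j+1) - clampd n d j)^2 := by
  have h : ∀ i : Fin n, (d i.succ - d i.castSucc)^2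
      = (fun j : ℕ => (clampd n d (j+1) - clampd n d j)^2) ↑i := fun i => by
    rw [step_eq d i]
  rw [Finset.sum_congr rfl (fun i _ => h i),
    Fin.sum_univ_eq_sum_range (fun j : ℕ => (clampd n d (j+1) - clampd n d j)^2) n]

noncomputable def gstep (n : ℕ) (d : Fin (n+1) → ℝ) : ℕ → ℝ
  | 0 => d 0
  | (k+1) => clampd n d (k+1) - clampd n d k

lemma gstep_partial {n : ℕ} (d : Fin (n+1) → ℝ) (k : ℕ) :
    ∑ j ∈ Finset.range (k+1), gstep n d j = clampd n d k := by
  induction k with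
  | zero => simp [gstep, clampd_zero]
  | succ k ih => rw [Finset.sum_range_succ, ih]; show _ + (clampd n d (k+1) - clampd n d k) = _; ring

lemma gstep_sumsq {n : ℕ} (d : Fin (n+1) → ℝ) :
    ∑ j ∈ Finset.range (n+1), (gstep n d j)^2
      = (d 0)^2 + ∑ i : Fin n, (d i.succ - d i.castSucc)^2 := by
  rw [Finset.sum_range_succ', sq_tele]
  show (∑ j ∈ Finset.range n, (clampd n d (j+1) - clampd n d j)^2) + (d 0)^2 = _
  ring

lemma lemA {n : ℕ} (d : Fin (n+1) → ℝ) :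
    ∑ i : Fin (n+1), (d i)^2
      ≤ ((n:ℝ)+1)^2 * ((d 0)^2 + ∑ i : Fin n, (d i.succ - d i.castSucc)^2) := by
  set T := ∑ j ∈ Finset.range (n+1), (gstep n d j)^2 with hT
  have hTnn : ∀ j ∈ Finset.range (n+1), 0 ≤ (gstep n d j)^2 := fun j _ => sq_nonneg _
  have hbound : ∀ i : Fin (n+1), (d i)^2 ≤ ((n:ℝ)+1) * T := by
    intro i
    have h1 : d i = ∑ j ∈ Finset.range (↑i+1), gstep n d j := by
      rw [gstep_partial, clampd_lt d i.isLt]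
    calc (d i)^2 = (∑ j ∈ Finset.range (↑i+1), gstep n d j)^2 := by rw [h1]
      _ ≤ (Finset.range (↑i+1)).card * ∑ j ∈ Finset.range (↑i+1), (gstep n d j)^2 :=
          sq_sum_le_card_mul_sum_sq
      _ ≤ ((n:ℝ)+1) * T := by
          apply mul_le_mul
          · simp; exact_mod_cast Nat.lt_succ_iff.mp i.isLt
          · exact Finset.sum_le_sum_of_subset_of_nonneg
              (Finset.range_subset_range.mpr (by omega)) (fun j hj _ => sq_nonneg _)
          · exact Finset.sum_nonneg (fun j _ => sq_nonneg _)
          · positivity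
  calc ∑ i : Fin (n+1), (d i)^2 ≤ ∑ _i : Fin (n+1), (((n:ℝ)+1) * T) :=
        Finset.sum_le_sum (fun i _ => hbound i)
    _ = ((n:ℝ)+1)^2 * ((d 0)^2 + ∑ i : Fin n, (d i.succ - d i.castSucc)^2) := by
        rw [← gstep_sumsq d, ← hT, Finset.sum_const, Finset.card_univ, Fintype.card_fin]
        ring

noncomputable def ysfun (n : ℕ) (c : ℝ) : EuclideanSpace ℝ (Fin (n + 1)) :=
  WithLp.toLp 2 (fun i => c * (2 * (i:ℝ) + 1) / (2 * ((n:ℝ) + 1)))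

noncomputable def Qf (n : ℕ) (d : Fin (n+1) → ℝ) : ℝ :=
  2 * (d 0)^2 + (∑ i : Fin n, (d i.succ - d i.castSucc)^2) + 2 * (d (Fin.last n))^2

lemma Gfun_id (n : ℕ) (c : ℝ) (y : EuclideanSpace ℝ (Fin (n+1))) :
    Gfun n c y = Qf n (fun i => y i - ysfun n c i) + c^2 / ((n:ℝ)+1) := by
  set a : ℝ := c / (2 * ((n:ℝ)+1)) with ha
  have hne : (2 : ℝ) * ((n:ℝ)+1) ≠ 0 := by positivity
  have hc : c = a * (2 * ((n:ℝ)+1)) := by rw [ha]; field_simp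
  set d : Fin (n+1) → ℝ := fun i => y i - ysfun n c i with hd
  have hy0 : y 0 = d 0 + a := by
    simp only [hd, ysfun]
    have : c * (2 * ((0 : Fin (n+1)):ℝ) + 1) / (2 * ((n:ℝ)+1)) = a := by
      rw [ha]; norm_num
    rw [this]; ring
  have hyn : c - y (Fin.last n) = a - d (Fin.last n) := by
    simp only [hd, ysfun]
    have : c * (2 * ((Fin.last n : Fin (n+1)):ℝ) + 1) / (2 * ((n:ℝ)+1)) = c - a := by
      rw [ha, Fin.val_last, eq_sub_iff_add_eq]
      field_simp; ring
    rw [this]; ring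
  have hstep : ∀ i : Fin n, y i.succ - y i.castSucc = (d i.succ - d i.castSucc) + 2 * a := by
    intro i
    simp only [hd, ysfun]
    have h1 : ((i.succ : Fin (n+1)) : ℝ) = (i:ℝ) + 1 := by simp
    have h2 : ((i.castSucc : Fin (n+1)) : ℝ) = (i:ℝ) := by simp
    rw [h1, h2, ha]
    field_simp; ring
  have hSum : ∑ i : Fin n, (y i.succ - y i.castSucc)^2
      = (∑ i : Fin n, (d i.succ - d i.castSucc)^2)
        + 4 * a * (d (Fin.last n) - d 0) + (n:ℝ) * (4 * a^2) := by
    have h1 : ∀ i : Fin n, (y i.succ - y i.castSucc)^2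
        = (d i.succ - d i.castSucc)^2 + 4 * a * (d i.succ - d i.castSucc) + 4 * a^2 := by
      intro i; rw [hstep i]; ring
    rw [Finset.sum_congr rfl (fun i _ => h1 i), Finset.sum_add_distrib, Finset.sum_add_distrib,
      ← Finset.mul_sum, tele d, Finset.sum_const, Finset.card_univ, Fintype.card_fin,
      nsmul_eq_mul]
  have hcn : c^2 / ((n:ℝ)+1) = 4 * ((n:ℝ)+1) * a^2 := by
    rw [hc]; field_simp; ring
  show 2 * (y 0) ^ 2 + (∑ i : Fin n, (y i.succ - y i.castSucc) ^ 2)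
      + 2 * (c - y (Fin.last n)) ^ 2 = _
  rw [hy0, hyn, hSum, hcn, Qf]
  ring

lemma key_ineq (n : ℕ) (c : ℝ) (y : EuclideanSpace ℝ (Fin (n+1))) :
    Gfun n c y - Gfun n c (ysfun n c) ≥ (1 / ((n:ℝ)+1)^2) * ‖y - ysfun n c‖^2 := by
  set d : Fin (n+1) → ℝ := fun i => y i - ysfun n c i with hd
  have hQ0 : Qf n (fun i => ysfun n c i - ysfun n c i) = 0 := by simp [Qf]
  have hdiff : Gfun n c y - Gfun n c (ysfun n c) = Qf n d := by
    rw [Gfun_id n c y, Gfun_id n c (ysfun n c), hQ0, ← hd]; ring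
  have hnorm : ‖y - ysfun n c‖^2 = ∑ i : Fin (n+1), (d i)^2 := by
    rw [EuclideanSpace.norm_eq, Real.sq_sqrt (by positivity)]
    refine Finset.sum_congr rfl fun i _ => ?_
    rw [Real.norm_eq_abs, sq_abs]
    rfl
  have hA := lemA d
  have hQS : (d 0)^2 + ∑ i : Fin n, (d i.succ - d i.castSucc)^2 ≤ Qf n d := by
    simp only [Qf]
    nlinarith [sq_nonneg (d 0), sq_nonneg (d (Fin.last n))]
  have hK : (0:ℝ) < ((n:ℝ)+1)^2 := by positivity
  rw [ge_iff_le, hdiff, hnorm, one_div, inv_mul_le_iff₀ hK]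
  calc ∑ i : Fin (n+1), (d i)^2
      ≤ ((n:ℝ)+1)^2 * ((d 0)^2 + ∑ i : Fin n, (d i.succ - d i.castSucc)^2) := hA
    _ ≤ ((n:ℝ)+1)^2 * Qf n d := mul_le_mul_of_nonneg_left hQS hK.le


/-- `G` has a unique global minimizer `y*`, and for every `y`,
`G(y) - G(y*) ≥ (1/n²)·‖y - y*‖₂²`. -/
theorem stmt6 (n : ℕ) (c : ℝ) :
    ∃ ys : EuclideanSpace ℝ (Fin (n + 1)),
      (∀ z, Gfun n c ys ≤ Gfun n c z)
      ∧ (∀ z, (∀ w, Gfun n c z ≤ Gfun n c w) → z = ys)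
      ∧ (∀ y, Gfun n c y - Gfun n c ys ≥ (1 / ((n : ℝ) + 1) ^ 2) * ‖y - ys‖ ^ 2) := by
  refine ⟨ysfun n c, ?_, ?_, fun y => key_ineq n c y⟩
  · intro z
    have h := key_ineq n c z
    have h2 : (0:ℝ) ≤ (1 / ((n:ℝ)+1)^2) * ‖z - ysfun n c‖^2 := by positivity
    linarith
  · intro z hz
    have h := key_ineq n c z
    have h2 := hz (ysfun n c)
    have hK : (0:ℝ) < 1 / ((n:ℝ)+1)^2 := by positivity
    have h3 : ‖z - ysfun n c‖^2 ≤ 0 := by nlinarith [sq_nonneg ‖z - ysfun n c‖]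
    have h4 : ‖z - ysfun n c‖ = 0 := by nlinarith [norm_nonneg (z - ysfun n c)]
    exact sub_eq_zero.mp (norm_eq_zero.mp h4)
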